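/- Let Ω = Ω₁ × ⋯ × Ω_m ⊂ ℝⁿ be a finite product of bounded domains, each with Lipschitz boundary. Then Ω is a bounded domain with Lipschitz boundary. -/

import Mathlib

/-!
Let `p` be a boundary point of the product and `T` the set of factors with `pᵢ ∈ ∂Ωᵢ`; every other
factor contains a neighbourhood of `pᵢ`. Near `pᵢ`, `Ωᵢ = {Gᵢ < 0}` for the Lipschitz function
`Gᵢ x = ⟪x, νᵢ⟫ - ψᵢ (x - ⟪x, νᵢ⟫ νᵢ)`, which grows at unit rate along `νᵢ`. Near `p` the product is
then `{G < 0}` for `G x = √|T| · maxᵢ∈T Gᵢ xᵢ`, which is Lipschitz and grows at unit rate along the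
unit vector `ν = |T|^{-1/2} (νᵢ)ᵢ∈T`; conversely such a `G` exhibits the set as the strict subgraph
of `-G` over `ν^⊥`. The coordinates of `ℝᴺ` are regrouped into the factors by the isometry
`ℝᴺ ≅ ∏ᵢ ℝ^{dᵢ}` induced by `e`.
-/
open Metric Bornology

noncomputable section

/-- A bounded domain in a Euclidean space has Lipschitz boundary if near each boundary point,
after choosing a unit direction `ν`, the domain is the strict subgraph of a Lipschitz function
over the hyperplane orthogonal to `ν`. -/
def HasLipschitzBoundaryR {k : ℕ} (Ω : Set (EuclideanSpace ℝ (Fin k))) : Prop :=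
  ∀ p ∈ frontier Ω, ∃ ν : EuclideanSpace ℝ (Fin k), ‖ν‖ = 1 ∧ ∃ ε > 0,
    ∃ (L : NNReal) (ψ : EuclideanSpace ℝ (Fin k) → ℝ), LipschitzWith L ψ ∧
      ∀ x ∈ ball p ε, (x ∈ Ω ↔ (inner ℝ x ν : ℝ) < ψ (x - (inner ℝ x ν : ℝ) • ν))

open Filter Topology Finset WithLp
open scoped NNReal RealInnerProductSpace

theorem LipschitzWith.finset_sup' {α ι : Type*} [PseudoEMetricSpace α] {s : Finset ι}
    (hs : s.Nonempty) {K : ℝ≥0} {f : ι → α → ℝ} (hf : ∀ i ∈ s, LipschitzWith K (f i)) :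
    LipschitzWith K fun x => s.sup' hs (f · x) := by
  simpa only [← funext (Finset.sup'_apply hs f)] using
    Finset.sup'_induction hs f (p := LipschitzWith K)
      (fun _ h₁ _ h₂ => by rw [← max_self K]; exact h₁.max h₂) hf

theorem PiLp.exists_norm_eq_one_apply_eq {ι : Type*} [Fintype ι] {E : ι → Type*}
    [∀ i, NormedAddCommGroup (E i)] [∀ i, NormedSpace ℝ (E i)] {T : Finset ι} (hT : T.Nonempty)
    {ν : ∀ i, E i} (hν : ∀ i ∈ T, ‖ν i‖ = 1) :
    ∃ n : PiLp 2 E, ‖n‖ = 1 ∧ ∀ i ∈ T, n i = (√(#T : ℝ))⁻¹ • ν i := by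
  classical
  refine ⟨toLp 2 fun i => if i ∈ T then (√(#T : ℝ))⁻¹ • ν i else 0, ?_, fun i hi => by simp [hi]⟩
  have hT' : (0 : ℝ) < #T := by exact_mod_cast hT.card_pos
  rw [PiLp.norm_eq_of_L2, Real.sqrt_eq_one,
    ← Finset.sum_subset (subset_univ T) fun i _ hi => by simp [hi],
    Finset.sum_congr rfl fun i hi => (show ‖_‖ ^ 2 = (#T : ℝ)⁻¹ by
      simp [hi, norm_smul, hν i hi, inv_pow, Real.sq_sqrt hT'.le])]
  simp [hT'.ne']

section

variable {E : Type*} [NormedAddCommGroup E] [InnerProductSpace ℝ E]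

def HasLipschitzDefiningFunctions (Ω : Set E) : Prop :=
  ∀ p ∈ frontier Ω, ∃ ν : E, ‖ν‖ = 1 ∧ ∃ (L : ℝ≥0) (G : E → ℝ), LipschitzWith L G ∧
    (∀ x (t : ℝ), G (x + t • ν) = G x + t) ∧ ∀ᶠ x in 𝓝 p, (x ∈ Ω ↔ G x < 0)

def heightOverGraph (ν : E) (ψ : E → ℝ) (x : E) : ℝ :=
  ⟪x, ν⟫ - ψ (x - ⟪x, ν⟫ • ν)

theorem heightOverGraph_add_smul {ν : E} (hν : ‖ν‖ = 1) (ψ : E → ℝ) (x : E) (t : ℝ) :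
    heightOverGraph ν ψ (x + t • ν) = heightOverGraph ν ψ x + t := by
  have h : ⟪x + t • ν, ν⟫ = ⟪x, ν⟫ + t := by
    rw [inner_add_left, real_inner_smul_left, real_inner_self_eq_norm_sq, hν, one_pow, mul_one]
  simp only [heightOverGraph, h, add_smul, add_sub_add_right_eq_sub]
  ring

theorem heightOverGraph_neg {ν : E} {G : E → ℝ} (hG : ∀ x (t : ℝ), G (x + t • ν) = G x + t) :
    heightOverGraph ν (-G) = G := by
  ext x
  simpa [heightOverGraph, add_comm] using (hG (x - ⟪x, ν⟫ • ν) ⟪x, ν⟫).symm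

theorem LipschitzWith.exists_lipschitzWith_heightOverGraph {L : ℝ≥0} {ψ : E → ℝ}
    (hψ : LipschitzWith L ψ) (ν : E) : ∃ K, LipschitzWith K (heightOverGraph ν ψ) := by
  set ℓ := innerSL ℝ ν
  set P := ContinuousLinearMap.id ℝ E - ℓ.smulRight ν
  have h : heightOverGraph ν ψ = fun x => ℓ x - (ψ ∘ P) x := by
    ext x
    simp [heightOverGraph, ℓ, P, real_inner_comm]
  exact h ▸ ⟨_, ℓ.lipschitz.sub (hψ.comp P.lipschitz)⟩

theorem HasLipschitzDefiningFunctions.preimage {F : Type*} [NormedAddCommGroup F]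
    [InnerProductSpace ℝ F] (Φ : E ≃ₗᵢ[ℝ] F) {Ω : Set F} (h : HasLipschitzDefiningFunctions Ω) :
    HasLipschitzDefiningFunctions (Φ ⁻¹' Ω) := by
  intro p hp
  rw [← Φ.coe_toHomeomorph, ← Φ.toHomeomorph.preimage_frontier] at hp
  obtain ⟨ν, hν, L, G, hG, hshift, hloc⟩ := h (Φ p) hp
  refine ⟨Φ.symm ν, by simpa using hν, L, G ∘ Φ, by simpa using hG.comp Φ.lipschitz,
    fun x t => by simp [hshift], (Φ.continuous.tendsto p).eventually hloc⟩

end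

theorem hasLipschitzBoundaryR_iff {k : ℕ} (Ω : Set (EuclideanSpace ℝ (Fin k))) :
    HasLipschitzBoundaryR Ω ↔ HasLipschitzDefiningFunctions Ω := by
  refine forall₂_congr fun p _ => ⟨?_, ?_⟩
  · rintro ⟨ν, hν, ε, hε, L, ψ, hψ, hloc⟩
    obtain ⟨K, hK⟩ := hψ.exists_lipschitzWith_heightOverGraph ν
    exact ⟨ν, hν, K, heightOverGraph ν ψ, hK, heightOverGraph_add_smul hν ψ,
      Metric.eventually_nhds_iff_ball.2 ⟨ε, hε, fun x hx => (hloc x hx).trans sub_neg.symm⟩⟩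
  · rintro ⟨ν, hν, L, G, hG, hshift, hloc⟩
    obtain ⟨ε, hε, hball⟩ := Metric.eventually_nhds_iff_ball.1 hloc
    refine ⟨ν, hν, ε, hε, L, -G, hG.neg, fun x hx => ?_⟩
    rw [hball x hx, ← congrFun (heightOverGraph_neg hshift) x, heightOverGraph, sub_neg]

theorem PiLp.isOpen_ofLp_preimage_pi {ι : Type*} [Finite ι] {E : ι → Type*}
    [∀ i, TopologicalSpace (E i)] {Ω : ∀ i, Set (E i)} (hopen : ∀ i, IsOpen (Ω i)) :
    IsOpen (ofLp ⁻¹' Set.univ.pi Ω : Set (PiLp 2 E)) :=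
  (isOpen_set_pi Set.finite_univ fun i _ => hopen i).preimage (PiLp.continuous_ofLp 2 E)

theorem HasLipschitzDefiningFunctions.piLp {ι : Type*} [Fintype ι] {E : ι → Type*}
    [∀ i, NormedAddCommGroup (E i)] [∀ i, InnerProductSpace ℝ (E i)] {Ω : ∀ i, Set (E i)}
    (hopen : ∀ i, IsOpen (Ω i)) (h : ∀ i, HasLipschitzDefiningFunctions (Ω i)) :
    HasLipschitzDefiningFunctions (ofLp ⁻¹' Set.univ.pi Ω : Set (PiLp 2 E)) := by
  classical
  intro p hp
  set T := univ.filter fun i => p i ∉ Ω i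
  have hT : T.Nonempty := by
    have hp' : p ∉ ofLp ⁻¹' Set.univ.pi Ω := by
      simpa [(PiLp.isOpen_ofLp_preimage_pi hopen).interior_eq] using hp.2
    simpa [T, Finset.filter_nonempty_iff] using hp'
  have hfront : ∀ i ∈ T, p i ∈ frontier (Ω i) := fun i hi =>
    ⟨map_mem_closure (PiLp.continuous_apply 2 E i) hp.1 fun x hx => hx i (Set.mem_univ i),
     by rw [(hopen i).interior_eq]; exact (mem_filter.1 hi).2⟩
  choose! ν hν L G hG hshift hloc using fun i hi => h i (p i) (hfront i hi)
  obtain ⟨n, hn, hnT⟩ := PiLp.exists_norm_eq_one_apply_eq hT hν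
  set c := √(#T : ℝ)
  have hc : 0 < c := Real.sqrt_pos.2 (by exact_mod_cast hT.card_pos)
  refine ⟨n, hn, ‖c‖₊ * T.sup L, fun x => c • T.sup' hT fun i => G i (x i), ?_, fun x t => ?_, ?_⟩
  · refine (lipschitzWith_smul c).comp (LipschitzWith.finset_sup' hT fun i hi => ?_)
    exact (((hG i hi).comp ((LipschitzWith.eval i).comp (PiLp.lipschitzWith_ofLp 2 E))).weaken
      (by simpa using le_sup (f := L) hi))
  · have hx : ∀ i ∈ T, G i ((x + t • n) i) = G i (x i) + t * c⁻¹ := fun i hi => by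
      rw [PiLp.add_apply, PiLp.smul_apply, hnT i hi, smul_smul, hshift i hi]
    dsimp only
    rw [Finset.sup'_congr hT rfl hx, ← Finset.sup'_add, smul_add, smul_eq_mul c (t * c⁻¹)]
    field_simp
  · have hev (i : ι) :
        ∀ᶠ y in 𝓝 (p i), (i ∈ T → (y ∈ Ω i ↔ G i y < 0)) ∧ (i ∉ T → y ∈ Ω i) := by
      by_cases hi : i ∈ T
      · exact (hloc i hi).mono fun y hy => ⟨fun _ => hy, fun h => absurd hi h⟩
      · exact Filter.Eventually.mono ((hopen i).mem_nhds (by simpa [T] using hi))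
          fun y hy => ⟨fun h => absurd h hi, fun _ => hy⟩
    filter_upwards [Filter.eventually_all.2 fun i =>
      ((PiLp.continuous_apply 2 E i).tendsto p).eventually (hev i)] with x hx
    simp only [Set.mem_preimage, Set.mem_univ_pi, smul_neg_iff_of_pos_left hc, Finset.sup'_lt_iff]
    exact ⟨fun h i hi => ((hx i).1 hi).1 (h i), fun h i =>
      if hi : i ∈ T then ((hx i).1 hi).2 (h i hi) else (hx i).2 hi⟩

theorem statement14 {m N : ℕ} (d : Fin m → ℕ) (e : (Σ i, Fin (d i)) ≃ Fin N)
    (Ωi : ∀ i, Set (EuclideanSpace ℝ (Fin (d i))))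
    (hopen : ∀ i, IsOpen (Ωi i)) (hconn : ∀ i, IsConnected (Ωi i))
    (hbdd : ∀ i, IsBounded (Ωi i)) (hlip : ∀ i, HasLipschitzBoundaryR (Ωi i))
    (Ω : Set (EuclideanSpace ℝ (Fin N)))
    (hΩ : Ω = {x : EuclideanSpace ℝ (Fin N) |
      ∀ i, (WithLp.toLp 2 (fun k => x (e ⟨i, k⟩)) : EuclideanSpace ℝ (Fin (d i))) ∈ Ωi i}) :
    IsOpen Ω ∧ IsConnected Ω ∧ IsBounded Ω ∧ HasLipschitzBoundaryR Ω := by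
  let Φ : EuclideanSpace ℝ (Fin N) ≃ₗᵢ[ℝ] PiLp 2 fun i => EuclideanSpace ℝ (Fin (d i)) :=
    (LinearIsometryEquiv.piLpCongrLeft 2 ℝ ℝ e.symm).trans
      (LinearIsometryEquiv.piLpCurry ℝ 2 fun i (_ : Fin (d i)) => ℝ)
  have hΩΦ : Ω = Φ ⁻¹' (ofLp ⁻¹' Set.univ.pi Ωi) := by
    subst hΩ
    ext x
    exact ⟨fun h i _ => h i, fun h i => h i (Set.mem_univ i)⟩
  subst hΩΦ
  refine ⟨(PiLp.isOpen_ofLp_preimage_pi hopen).preimage Φ.continuous, ?_, ?_, ?_⟩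
  · rw [← Φ.coe_toHomeomorph, Φ.toHomeomorph.isConnected_preimage]
    exact (PiLp.homeomorph 2 _).isConnected_preimage.2 (isConnected_univ_pi.2 hconn)
  · exact Φ.isometry.antilipschitz.isBounded_preimage
      ((PiLp.antilipschitzWith_ofLp 2 _).isBounded_preimage (isBounded_pi.2 (Or.inr hbdd)))
  · rw [hasLipschitzBoundaryR_iff]
    exact (HasLipschitzDefiningFunctions.piLp hopen
      fun i => (hasLipschitzBoundaryR_iff _).1 (hlip i)).preimage Φ
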